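/- arXiv:2403.19455 — 3 statements merged into one kernel-verified Lean document; each statement's English description precedes it below -/
import Mathlib

section
/- Fix n ∈ ℕ and parameters μ, λ₁,…,λₙ ∈ C¹([0,1];ℝ) with μ(x) > 0 and λᵢ(x) > 0 for all x, σ_{i,j}, Wᵢ, θᵢ ∈ C([0,1];ℝ), qᵢ ∈ ℝ for i,j = 1,…,n. Let k¹,…,kⁿ⁺¹ : 𝒯 → ℝ be C¹ functions satisfying the n+1 kernel equations with these parameters. Define the step functions λⁿ(x,y) = λᵢ(x), Wⁿ(x,y) = Wᵢ(x), θⁿ(x,y) = θᵢ(x), qⁿ(y) = qᵢ for y ∈ Iᵢ, σⁿ(x,y,η) = σ_{i,j}(x) for (y,η) ∈ Iᵢ×Iⱼ, and kⁿ(x,ξ,y) = kⁱ(x,ξ) for y ∈ Iᵢ. Then for every i = 1,…,n, every y ∈ Iᵢ and all (x,ξ) ∈ 𝒯: (i) μ(x)∂ₓkⁿ(x,ξ,y) − λⁿ(ξ,y)∂_ξkⁿ(x,ξ,y) − θⁿ(ξ,y)kⁿ⁺¹(x,ξ) = λᵢ′(ξ)kⁿ(x,ξ,y) + ∫₀¹σⁿ(ξ,η,y)kⁿ(x,ξ,η)dη;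 (ii) μ(x)∂ₓkⁿ⁺¹(x,ξ) + μ(ξ)∂_ξkⁿ⁺¹(x,ξ) = −μ′(ξ)kⁿ⁺¹(x,ξ) + ∫₀¹Wⁿ(ξ,y)kⁿ(x,ξ,y)dy; (iii) kⁿ(x,x,y) = −θⁿ(x,y)/(λⁿ(x,y)+μ(x)) for all x ∈ [0,1]; (iv) μ(0)kⁿ⁺¹(x,0) = ∫₀¹qⁿ(y)λⁿ(0,y)kⁿ(x,0,y)dy for all x ∈ [0,1]. That is, (kⁿ, kⁿ⁺¹) satisfies the continuum kernel equations with the step parameters λⁿ, μ, σⁿ, θⁿ, Wⁿ, qⁿ for almost every y ∈ [0,1]. -/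
/-!
On the cell `Iᵢ = ((i-1)/n, i/n]` the index `⌈n·y⌉` equals `i`, so every step function is
constant on each cell and `∫₀¹ f(⌈n·y⌉) dy = (1/n) ∑ᵢ f(i)`. The continuum equations for the
step kernels are therefore the `n+1` kernel equations, with the averages `(1/n) ∑ⱼ` read as
integrals over `[0,1]`.
-/

open MeasureTheory Set
open scoped Interval

theorem toNat_ceil_mul_eq_of_mem_Ioc {n i : ℕ} (hn : 0 < n) {y : ℝ}
    (hy : y ∈ Ioc (((i : ℝ) - 1) / n) ((i : ℝ) / n)) : (⌈(n : ℝ) * y⌉).toNat = i := by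
  have hn' : (0 : ℝ) < n := Nat.cast_pos.mpr hn
  have hlo : (i : ℝ) - 1 < n * y := by
    have := (div_lt_iff₀ hn').mp hy.1
    linarith
  have hhi : (n : ℝ) * y ≤ i := by
    have := (le_div_iff₀ hn').mp hy.2
    linarith
  have hceil : ⌈(n : ℝ) * y⌉ = i := by
    rw [Int.ceil_eq_iff]
    push_cast
    exact ⟨hlo, hhi⟩
  rw [hceil, Int.toNat_natCast]

theorem eqOn_comp_toNat_ceil_mul_uIoc {E : Type*} {n : ℕ} (hn : 0 < n) (f : ℕ → E) (k : ℕ) :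
    EqOn (fun η : ℝ => f (⌈(n : ℝ) * η⌉).toNat) (fun _ => f (k + 1))
      (Ι ((k : ℝ) / n) ((k + 1 : ℝ) / n)) := by
  intro η hη
  rw [uIoc_of_le (by gcongr; linarith)] at hη
  have hη' : η ∈ Ioc ((((k + 1 : ℕ) : ℝ) - 1) / n) (((k + 1 : ℕ) : ℝ) / n) := by
    simpa using hη
  simp only [toNat_ceil_mul_eq_of_mem_Ioc hn hη']

theorem intervalIntegral_comp_toNat_ceil_mul {E : Type*} [NormedAddCommGroup E]
    [NormedSpace ℝ E] [CompleteSpace E] {n : ℕ} (hn : 0 < n) (f : ℕ → E) :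
    ∫ η in (0 : ℝ)..1, f (⌈(n : ℝ) * η⌉).toNat = (1 / n : ℝ) • ∑ j ∈ Finset.Icc 1 n, f j := by
  have hn' : (n : ℝ) ≠ 0 := Nat.cast_ne_zero.mpr hn.ne'
  have hcell (k : ℕ) :
      ∫ η in ((k : ℝ) / n)..((k + 1 : ℝ) / n), f (⌈(n : ℝ) * η⌉).toNat
        = (1 / n : ℝ) • f (k + 1) := by
    rw [intervalIntegral.integral_congr_ae
        (ae_of_all _ (eqOn_comp_toNat_ceil_mul_uIoc hn f k)),
      intervalIntegral.integral_const]
    congr 1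
    field_simp
    ring
  have hint (k : ℕ) (_ : k < n) : IntervalIntegrable (fun η : ℝ => f (⌈(n : ℝ) * η⌉).toNat)
      volume ((k : ℝ) / n) (((k + 1 : ℕ) : ℝ) / n) := by
    rw [Nat.cast_succ, intervalIntegrable_congr (eqOn_comp_toNat_ceil_mul_uIoc hn f k)]
    exact intervalIntegrable_const
  have hsum := intervalIntegral.sum_integral_adjacent_intervals hint
  simp only [Nat.cast_zero, zero_div, div_self hn', Nat.cast_succ] at hsum
  rw [← hsum, Finset.sum_congr rfl fun k _ => hcell k, ← Finset.smul_sum, Finset.range_eq_Ico,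
    Finset.sum_Ico_add', zero_add, Finset.Ico_add_one_right_eq_Icc]

theorem stmt_1_general (n : ℕ)
    (μ : ℝ → ℝ) (lam : ℕ → ℝ → ℝ) (σ : ℕ → ℕ → ℝ → ℝ) (W θ : ℕ → ℝ → ℝ) (q : ℕ → ℝ)
    (kk : ℕ → ℝ → ℝ → ℝ) (kb : ℝ → ℝ → ℝ)
    -- the n+1 kernel equations
    (heq1 : ∀ i ∈ Finset.Icc 1 n, ∀ x ξ : ℝ, 0 ≤ ξ → ξ ≤ x → x ≤ 1 →
      μ x * deriv (fun x' => kk i x' ξ) x - lam i ξ * deriv (fun ξ' => kk i x ξ') ξ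
        = deriv (lam i) ξ * kk i x ξ
          + (1 / n : ℝ) * ∑ j ∈ Finset.Icc 1 n, σ j i ξ * kk j x ξ
          + θ i ξ * kb x ξ)
    (heq2 : ∀ x ξ : ℝ, 0 ≤ ξ → ξ ≤ x → x ≤ 1 →
      μ x * deriv (fun x' => kb x' ξ) x + μ ξ * deriv (fun ξ' => kb x ξ') ξ
        = -deriv μ ξ * kb x ξ
          + (1 / n : ℝ) * ∑ j ∈ Finset.Icc 1 n, W j ξ * kk j x ξ)
    (hbc1 : ∀ i ∈ Finset.Icc 1 n, ∀ x ∈ Set.Icc (0:ℝ) 1,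
      kk i x x = -θ i x / (lam i x + μ x))
    (hbc2 : ∀ x ∈ Set.Icc (0:ℝ) 1,
      μ 0 * kb x 0 = (1 / n : ℝ) * ∑ j ∈ Finset.Icc 1 n, q j * lam j 0 * kk j x 0) :
    ∀ i ∈ Finset.Icc 1 n, ∀ y ∈ Set.Ioc (((i : ℝ) - 1) / n) ((i : ℝ) / n),
      -- (i)
      (∀ x ξ : ℝ, 0 ≤ ξ → ξ ≤ x → x ≤ 1 →
        μ x * deriv (fun x' => kk (⌈(n : ℝ) * y⌉).toNat x' ξ) x
          - lam (⌈(n : ℝ) * y⌉).toNat ξ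
            * deriv (fun ξ' => kk (⌈(n : ℝ) * y⌉).toNat x ξ') ξ
          - θ (⌈(n : ℝ) * y⌉).toNat ξ * kb x ξ
        = deriv (lam i) ξ * kk (⌈(n : ℝ) * y⌉).toNat x ξ
          + ∫ η in (0:ℝ)..1, σ (⌈(n : ℝ) * η⌉).toNat (⌈(n : ℝ) * y⌉).toNat ξ
              * kk (⌈(n : ℝ) * η⌉).toNat x ξ) ∧
      -- (ii)
      (∀ x ξ : ℝ, 0 ≤ ξ → ξ ≤ x → x ≤ 1 →
        μ x * deriv (fun x' => kb x' ξ) x + μ ξ * deriv (fun ξ' => kb x ξ') ξ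
        = -deriv μ ξ * kb x ξ
          + ∫ y' in (0:ℝ)..1, W (⌈(n : ℝ) * y'⌉).toNat ξ
              * kk (⌈(n : ℝ) * y'⌉).toNat x ξ) ∧
      -- (iii)
      (∀ x ∈ Set.Icc (0:ℝ) 1,
        kk (⌈(n : ℝ) * y⌉).toNat x x
          = -θ (⌈(n : ℝ) * y⌉).toNat x / (lam (⌈(n : ℝ) * y⌉).toNat x + μ x)) ∧
      -- (iv)
      (∀ x ∈ Set.Icc (0:ℝ) 1,
        μ 0 * kb x 0 = ∫ y' in (0:ℝ)..1, q (⌈(n : ℝ) * y'⌉).toNat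
          * lam (⌈(n : ℝ) * y'⌉).toNat 0 * kk (⌈(n : ℝ) * y'⌉).toNat x 0) := by
  intro i hi y hy
  have hn : 0 < n := (Finset.mem_Icc.mp hi).1.trans (Finset.mem_Icc.mp hi).2
  have hcell : (⌈(n : ℝ) * y⌉).toNat = i := toNat_ceil_mul_eq_of_mem_Ioc hn hy
  refine ⟨fun x ξ h0 h1 h2 => ?_, fun x ξ h0 h1 h2 => ?_, fun x hx => ?_, fun x hx => ?_⟩
  · rw [hcell, intervalIntegral_comp_toNat_ceil_mul hn (fun j => σ j i ξ * kk j x ξ),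
      smul_eq_mul]
    linarith [heq1 i hi x ξ h0 h1 h2]
  · rw [intervalIntegral_comp_toNat_ceil_mul hn (fun j => W j ξ * kk j x ξ), smul_eq_mul]
    exact heq2 x ξ h0 h1 h2
  · rw [hcell]
    exact hbc1 i hi x hx
  · rw [intervalIntegral_comp_toNat_ceil_mul hn (fun j => q j * lam j 0 * kk j x 0),
      smul_eq_mul]
    exact hbc2 x hx

/-- If the C¹ kernels `k¹,…,kⁿ⁺¹` solve the n+1 kernel equations,
then the step functions `kⁿ(x,ξ,y) = kⁱ(x,ξ)` for `y ∈ Iᵢ = ((i−1)/n, i/n]`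
(realized via `i = ⌈n·y⌉`), together with `kⁿ⁺¹`, satisfy the continuum kernel
equations with the step parameters `λⁿ, μ, σⁿ, θⁿ, Wⁿ, qⁿ`. -/
theorem stmt_1 (n : ℕ) (hn : 1 ≤ n)
    (μ : ℝ → ℝ) (lam : ℕ → ℝ → ℝ) (σ : ℕ → ℕ → ℝ → ℝ) (W θ : ℕ → ℝ → ℝ) (q : ℕ → ℝ)
    (hμ : ContDiffOn ℝ 1 μ (Set.Icc 0 1))
    (hμpos : ∀ x ∈ Set.Icc (0:ℝ) 1, 0 < μ x)
    (hlam : ∀ i ∈ Finset.Icc 1 n, ContDiffOn ℝ 1 (lam i) (Set.Icc 0 1))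
    (hlampos : ∀ i ∈ Finset.Icc 1 n, ∀ x ∈ Set.Icc (0:ℝ) 1, 0 < lam i x)
    (hσ : ∀ i ∈ Finset.Icc 1 n, ∀ j ∈ Finset.Icc 1 n,
      ContinuousOn (σ i j) (Set.Icc 0 1))
    (hW : ∀ i ∈ Finset.Icc 1 n, ContinuousOn (W i) (Set.Icc 0 1))
    (hθ : ∀ i ∈ Finset.Icc 1 n, ContinuousOn (θ i) (Set.Icc 0 1))
    (kk : ℕ → ℝ → ℝ → ℝ) (kb : ℝ → ℝ → ℝ)
    (hkkC1 : ∀ i ∈ Finset.Icc 1 n, ContDiffOn ℝ 1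
      (fun pt : ℝ × ℝ => kk i pt.1 pt.2)
      {pt : ℝ × ℝ | 0 ≤ pt.2 ∧ pt.2 ≤ pt.1 ∧ pt.1 ≤ 1})
    (hkbC1 : ContDiffOn ℝ 1 (fun pt : ℝ × ℝ => kb pt.1 pt.2)
      {pt : ℝ × ℝ | 0 ≤ pt.2 ∧ pt.2 ≤ pt.1 ∧ pt.1 ≤ 1})
    -- the n+1 kernel equations
    (heq1 : ∀ i ∈ Finset.Icc 1 n, ∀ x ξ : ℝ, 0 ≤ ξ → ξ ≤ x → x ≤ 1 →
      μ x * deriv (fun x' => kk i x' ξ) x - lam i ξ * deriv (fun ξ' => kk i x ξ') ξ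
        = deriv (lam i) ξ * kk i x ξ
          + (1 / n : ℝ) * ∑ j ∈ Finset.Icc 1 n, σ j i ξ * kk j x ξ
          + θ i ξ * kb x ξ)
    (heq2 : ∀ x ξ : ℝ, 0 ≤ ξ → ξ ≤ x → x ≤ 1 →
      μ x * deriv (fun x' => kb x' ξ) x + μ ξ * deriv (fun ξ' => kb x ξ') ξ
        = -deriv μ ξ * kb x ξ
          + (1 / n : ℝ) * ∑ j ∈ Finset.Icc 1 n, W j ξ * kk j x ξ)
    (hbc1 : ∀ i ∈ Finset.Icc 1 n, ∀ x ∈ Set.Icc (0:ℝ) 1,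
      kk i x x = -θ i x / (lam i x + μ x))
    (hbc2 : ∀ x ∈ Set.Icc (0:ℝ) 1,
      μ 0 * kb x 0 = (1 / n : ℝ) * ∑ j ∈ Finset.Icc 1 n, q j * lam j 0 * kk j x 0) :
    ∀ i ∈ Finset.Icc 1 n, ∀ y ∈ Set.Ioc (((i : ℝ) - 1) / n) ((i : ℝ) / n),
      -- (i)
      (∀ x ξ : ℝ, 0 ≤ ξ → ξ ≤ x → x ≤ 1 →
        μ x * deriv (fun x' => kk (⌈(n : ℝ) * y⌉).toNat x' ξ) x
          - lam (⌈(n : ℝ) * y⌉).toNat ξ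
            * deriv (fun ξ' => kk (⌈(n : ℝ) * y⌉).toNat x ξ') ξ
          - θ (⌈(n : ℝ) * y⌉).toNat ξ * kb x ξ
        = deriv (lam i) ξ * kk (⌈(n : ℝ) * y⌉).toNat x ξ
          + ∫ η in (0:ℝ)..1, σ (⌈(n : ℝ) * η⌉).toNat (⌈(n : ℝ) * y⌉).toNat ξ
              * kk (⌈(n : ℝ) * η⌉).toNat x ξ) ∧
      -- (ii)
      (∀ x ξ : ℝ, 0 ≤ ξ → ξ ≤ x → x ≤ 1 →
        μ x * deriv (fun x' => kb x' ξ) x + μ ξ * deriv (fun ξ' => kb x ξ') ξ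
        = -deriv μ ξ * kb x ξ
          + ∫ y' in (0:ℝ)..1, W (⌈(n : ℝ) * y'⌉).toNat ξ
              * kk (⌈(n : ℝ) * y'⌉).toNat x ξ) ∧
      -- (iii)
      (∀ x ∈ Set.Icc (0:ℝ) 1,
        kk (⌈(n : ℝ) * y⌉).toNat x x
          = -θ (⌈(n : ℝ) * y⌉).toNat x / (lam (⌈(n : ℝ) * y⌉).toNat x + μ x)) ∧
      -- (iv)
      (∀ x ∈ Set.Icc (0:ℝ) 1,
        μ 0 * kb x 0 = ∫ y' in (0:ℝ)..1, q (⌈(n : ℝ) * y'⌉).toNat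
          * lam (⌈(n : ℝ) * y'⌉).toNat 0 * kk (⌈(n : ℝ) * y'⌉).toNat x 0) :=
  stmt_1_general n μ lam σ W θ q kk kb heq1 heq2 hbc1 hbc2
end

section
/- Let n ∈ ℕ, M ≥ 0, and let k¹,…,kⁿ⁺¹ : 𝒯 → ℝ be continuous with |kⁱ(x,ξ)| ≤ M for all (x,ξ) ∈ 𝒯 and all i = 1,…,n+1. Given α¹,…,αⁿ, β ∈ L²([0,1];ℝ), define w(x) = β(x) + ∫₀ˣ ((1/n)∑_{i=1}^n kⁱ(x,ξ)αⁱ(ξ) + kⁿ⁺¹(x,ξ)β(ξ)) dξ. Then ‖(α,w)‖_E ≤ (1+2M)‖(α,β)‖_E, where (α,w) has the same first n components α¹,…,αⁿ and last component w. -/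
/-!
Write `ρ = √((1/n)∑ᵢ (αⁱ)² + β²)`, so that `‖(α, β)‖_E = ‖ρ‖_{L²}`. Since `|kⁱ| ≤ M` and the mean of
the `|αⁱ(ξ)|` is at most their quadratic mean, the integrand defining `w - β` is bounded by
`2M ρ(ξ)`; hence, by Jensen's inequality for `√`, `|w(x) - β(x)| ≤ 2M ∫ρ ≤ 2M ‖(α, β)‖_E` for every
`x ∈ [0, 1]`. Perturbing the last component by a function bounded by `C` changes the `E`-norm by
at most `C` (Minkowski), which gives the factor `1 + 2M`.
-/

open MeasureTheory Set

section ProbabilitySpace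

variable {Ω : Type*} [MeasurableSpace Ω] {μ : Measure Ω}

lemma MeasureTheory.Integrable.sqrt [IsFiniteMeasure μ] {h : Ω → ℝ} (hh : Integrable h μ)
    (h0 : 0 ≤ᵐ[μ] h) : Integrable (fun x => √(h x)) μ := by
  have hmeas : AEStronglyMeasurable (fun x => √(h x)) μ :=
    Real.continuous_sqrt.comp_aestronglyMeasurable hh.aestronglyMeasurable
  refine ((memLp_two_iff_integrable_sq hmeas).2 ?_).integrable one_le_two
  refine hh.congr ?_
  filter_upwards [h0] with x hx
  exact (Real.sq_sqrt hx).symm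

lemma integral_sqrt_le_sqrt_integral [IsProbabilityMeasure μ] {h : Ω → ℝ}
    (hh : Integrable h μ) (h0 : 0 ≤ᵐ[μ] h) :
    ∫ x, √(h x) ∂μ ≤ √(∫ x, h x ∂μ) :=
  Real.strictConcaveOn_sqrt.concaveOn.le_map_integral Real.continuous_sqrt.continuousOn
    isClosed_Ici h0 hh (hh.sqrt h0)

lemma sqrt_integral_add_sq_le_add_of_abs_le [IsProbabilityMeasure μ] {q β g : Ω → ℝ} {C : ℝ}
    (hq : Integrable q μ) (hq0 : 0 ≤ q) (hβ : MemLp β 2 μ) (hg : ∀ᵐ x ∂μ, |g x| ≤ C) :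
    √(∫ x, q x + (β x + g x) ^ 2 ∂μ) ≤ √(∫ x, q x + β x ^ 2 ∂μ) + C := by
  obtain ⟨x₀, hx₀⟩ := hg.exists
  have hC : 0 ≤ C := (abs_nonneg _).trans hx₀
  have hβ2 : Integrable (fun x => β x ^ 2) μ := hβ.integrable_sq
  set S := √(∫ x, q x + β x ^ 2 ∂μ)
  have hS : S ^ 2 = ∫ x, q x + β x ^ 2 ∂μ :=
    Real.sq_sqrt (integral_nonneg fun x => add_nonneg (hq0 x) (sq_nonneg _))
  have hβ1 : ∫ x, |β x| ∂μ ≤ S := calc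
    ∫ x, |β x| ∂μ = ∫ x, √(β x ^ 2) ∂μ := by simp only [Real.sqrt_sq_eq_abs]
    _ ≤ √(∫ x, β x ^ 2 ∂μ) :=
      integral_sqrt_le_sqrt_integral hβ2 (ae_of_all _ fun x => sq_nonneg _)
    _ ≤ S := Real.sqrt_le_sqrt <|
      integral_mono hβ2 (hq.add hβ2) fun x => le_add_of_nonneg_left (hq0 x)
  have hβ1i : Integrable (fun x => 2 * C * |β x|) μ := (hβ.integrable one_le_two).abs.const_mul _
  have hβCi : Integrable (fun x => 2 * C * |β x| + C ^ 2) μ := hβ1i.add (integrable_const _)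
  by_cases hi : Integrable (fun x => q x + (β x + g x) ^ 2) μ
  swap
  · rw [integral_undef hi, Real.sqrt_zero]; positivity
  have hpoint : ∀ᵐ x ∂μ, q x + (β x + g x) ^ 2 ≤ q x + β x ^ 2 + (2 * C * |β x| + C ^ 2) := by
    filter_upwards [hg] with x hx
    have hβg : β x * g x ≤ |β x| * C :=
      (le_abs_self _).trans (by rw [abs_mul]; exact mul_le_mul_of_nonneg_left hx (abs_nonneg _))
    nlinarith [abs_le.1 hx, sq_abs (g x)]
  have hint : ∫ x, q x + (β x + g x) ^ 2 ∂μ ≤ (S + C) ^ 2 := calc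
    _ ≤ ∫ x, q x + β x ^ 2 + (2 * C * |β x| + C ^ 2) ∂μ :=
      integral_mono_ae hi ((hq.add hβ2).add hβCi) hpoint
    _ = S ^ 2 + 2 * C * ∫ x, |β x| ∂μ + C ^ 2 := by
      rw [integral_add (f := fun x => q x + β x ^ 2) (hq.add hβ2) hβCi,
        integral_add hβ1i (integrable_const _), integral_const_mul, integral_const, ← hS]
      simp only [probReal_univ, smul_eq_mul, one_mul]
      ring
    _ ≤ (S + C) ^ 2 := by nlinarith
  exact (Real.sqrt_le_sqrt hint).trans_eq (Real.sqrt_sq (by positivity))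

end ProbabilitySpace

lemma abs_intervalIntegral_le_setIntegral_Icc {a x b : ℝ} (hax : a ≤ x) (hxb : x ≤ b)
    {F h : ℝ → ℝ} (hh : IntegrableOn h (Icc a b)) (h0 : 0 ≤ h)
    (hF : ∀ ξ ∈ Ioc a x, |F ξ| ≤ h ξ) :
    |∫ ξ in a..x, F ξ| ≤ ∫ ξ in Icc a b, h ξ := calc
  _ ≤ ∫ ξ in a..x, h ξ := by
    simpa only [Real.norm_eq_abs] using intervalIntegral.norm_integral_le_of_norm_le hax
      (ae_of_all _ fun ξ hξ => (Real.norm_eq_abs (F ξ)).trans_le (hF ξ hξ))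
      ((intervalIntegrable_iff_integrableOn_Icc_of_le hax).2
        (hh.mono_set (Icc_subset_Icc le_rfl hxb)))
  _ = ∫ ξ in Ioc a x, h ξ := intervalIntegral.integral_of_le hax
  _ ≤ ∫ ξ in Icc a b, h ξ := setIntegral_mono_set hh (ae_of_all _ h0)
      (Ioc_subset_Icc_self.trans (Icc_subset_Icc le_rfl hxb)).eventuallyLE

section FiniteMean

open Finset

lemma mean_abs_le_sqrt_mean_sq {ι : Type*} (s : Finset ι) (a : ι → ℝ) :
    (1 / #s : ℝ) * ∑ i ∈ s, |a i| ≤ √((1 / #s : ℝ) * ∑ i ∈ s, a i ^ 2) := by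
  refine (le_abs_self _).trans (Real.abs_le_sqrt ?_)
  simpa only [one_div_mul_eq_div, sq_abs] using
    sum_div_card_sq_le_sum_sq_div_card (s := s) (f := fun i => |a i|)

lemma abs_mean_mul_add_mul_le {ι : Type*} {s : Finset ι} {k a : ι → ℝ} {c b M : ℝ}
    (hk : ∀ i ∈ s, |k i| ≤ M) (hc : |c| ≤ M) :
    |(1 / #s : ℝ) * ∑ i ∈ s, k i * a i + c * b| ≤
      2 * M * √((1 / #s : ℝ) * ∑ i ∈ s, a i ^ 2 + b ^ 2) := by
  have hM : 0 ≤ M := (abs_nonneg c).trans hc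
  set ρ := √((1 / #s : ℝ) * ∑ i ∈ s, a i ^ 2 + b ^ 2)
  have hmean : (1 / #s : ℝ) * ∑ i ∈ s, |a i| ≤ ρ :=
    (mean_abs_le_sqrt_mean_sq s a).trans <|
      Real.sqrt_le_sqrt (le_add_of_nonneg_right (sq_nonneg b))
  have hb : |b| ≤ ρ := Real.abs_le_sqrt (le_add_of_nonneg_left (by positivity))
  have hsum : |(1 / #s : ℝ) * ∑ i ∈ s, k i * a i| ≤ M * ((1 / #s : ℝ) * ∑ i ∈ s, |a i|) := calc
    _ = (1 / #s : ℝ) * |∑ i ∈ s, k i * a i| := by rw [abs_mul, abs_of_nonneg (by positivity)]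
    _ ≤ (1 / #s : ℝ) * ∑ i ∈ s, M * |a i| := by
      gcongr
      refine (abs_sum_le_sum_abs _ _).trans (sum_le_sum fun i hi => ?_)
      rw [abs_mul]
      exact mul_le_mul_of_nonneg_right (hk i hi) (abs_nonneg _)
    _ = M * ((1 / #s : ℝ) * ∑ i ∈ s, |a i|) := by rw [← mul_sum]; ring
  calc _ ≤ |(1 / #s : ℝ) * ∑ i ∈ s, k i * a i| + |c * b| := abs_add_le _ _
    _ ≤ M * ρ + M * ρ := add_le_add (hsum.trans (mul_le_mul_of_nonneg_left hmean hM))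
      (by rw [abs_mul]; exact mul_le_mul hc hb (abs_nonneg b) hM)
    _ = 2 * M * ρ := by ring

end FiniteMean

instance : IsProbabilityMeasure (volume.restrict (Icc (0 : ℝ) 1)) := ⟨by simp⟩

theorem stmt_11_general (n : ℕ) (M : ℝ) (hM : 0 ≤ M)
    (kk : ℕ → ℝ → ℝ → ℝ) (kb : ℝ → ℝ → ℝ)
    (hkM : ∀ i ∈ Finset.Icc 1 n, ∀ x ξ : ℝ, 0 ≤ ξ → ξ ≤ x → x ≤ 1 → |kk i x ξ| ≤ M)
    (hkbM : ∀ x ξ : ℝ, 0 ≤ ξ → ξ ≤ x → x ≤ 1 → |kb x ξ| ≤ M)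
    (α : ℕ → ℝ → ℝ) (β : ℝ → ℝ)
    (hα : ∀ i ∈ Finset.Icc 1 n, MemLp (α i) 2 (volume.restrict (Set.Icc (0:ℝ) 1)))
    (hβ : MemLp β 2 (volume.restrict (Set.Icc (0:ℝ) 1))) :
    Real.sqrt (∫ x in (0:ℝ)..1,
        ((1 / n : ℝ) * ∑ i ∈ Finset.Icc 1 n, (α i x) ^ 2 +
          (β x + ∫ ξ in (0:ℝ)..x,
            ((1 / n : ℝ) * ∑ i ∈ Finset.Icc 1 n, kk i x ξ * α i ξ
              + kb x ξ * β ξ)) ^ 2)) ≤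
      (1 + 2 * M) * Real.sqrt (∫ x in (0:ℝ)..1,
        ((1 / n : ℝ) * ∑ i ∈ Finset.Icc 1 n, (α i x) ^ 2 + (β x) ^ 2)) := by
  set q : ℝ → ℝ := fun x => (1 / n : ℝ) * ∑ i ∈ Finset.Icc 1 n, α i x ^ 2
  have hq : Integrable q (volume.restrict (Icc 0 1)) :=
    (integrable_finsetSum _ fun i hi => (hα i hi).integrable_sq).const_mul _
  have hq0 : 0 ≤ q := fun x => by positivity
  have hE : Integrable (fun x => q x + β x ^ 2) (volume.restrict (Icc 0 1)) :=
    hq.add hβ.integrable_sq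
  set S := √(∫ x in Icc 0 1, q x + β x ^ 2)
  have hg : ∀ x ∈ Icc (0 : ℝ) 1, |∫ ξ in (0:ℝ)..x,
      ((1 / n : ℝ) * ∑ i ∈ Finset.Icc 1 n, kk i x ξ * α i ξ + kb x ξ * β ξ)| ≤ 2 * M * S := by
    intro x hx
    calc _ ≤ ∫ ξ in Icc 0 1, 2 * M * √(q ξ + β ξ ^ 2) := by
          refine abs_intervalIntegral_le_setIntegral_Icc hx.1 hx.2
            ((hE.sqrt (ae_of_all _ fun ξ => by positivity)).const_mul _)
            (fun ξ => by positivity) fun ξ hξ => ?_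
          have := abs_mean_mul_add_mul_le (s := Finset.Icc 1 n) (a := fun i => α i ξ) (b := β ξ)
            (fun i hi => hkM i hi x ξ hξ.1.le hξ.2 hx.2) (hkbM x ξ hξ.1.le hξ.2 hx.2)
          rwa [Nat.card_Icc, Nat.add_sub_cancel] at this
      _ = 2 * M * ∫ ξ in Icc 0 1, √(q ξ + β ξ ^ 2) := integral_const_mul _ _
      _ ≤ 2 * M * S := mul_le_mul_of_nonneg_left
          (integral_sqrt_le_sqrt_integral hE (ae_of_all _ fun ξ => by positivity)) (by positivity)
  rw [intervalIntegral.integral_of_le zero_le_one, intervalIntegral.integral_of_le zero_le_one,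
    ← integral_Icc_eq_integral_Ioc, ← integral_Icc_eq_integral_Ioc]
  calc _ ≤ S + 2 * M * S := sqrt_integral_add_sq_le_add_of_abs_le hq hq0 hβ
        (ae_restrict_of_forall_mem measurableSet_Icc hg)
    _ = (1 + 2 * M) * S := by ring

/-- If the kernels `k¹,…,kⁿ⁺¹` are continuous on the triangle `𝒯`
and bounded by `M`, then the backstepping-type transformation
`w(x) = β(x) + ∫₀ˣ ((1/n)∑ᵢ kⁱ(x,ξ)αⁱ(ξ) + kⁿ⁺¹(x,ξ)β(ξ)) dξ`
satisfies `‖(α,w)‖_E ≤ (1+2M)‖(α,β)‖_E`. -/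
theorem stmt_11 (n : ℕ) (M : ℝ) (hM : 0 ≤ M)
    (kk : ℕ → ℝ → ℝ → ℝ) (kb : ℝ → ℝ → ℝ)
    (hkc : ∀ i ∈ Finset.Icc 1 n, ContinuousOn (fun p : ℝ × ℝ => kk i p.1 p.2)
      {p : ℝ × ℝ | 0 ≤ p.2 ∧ p.2 ≤ p.1 ∧ p.1 ≤ 1})
    (hkbc : ContinuousOn (fun p : ℝ × ℝ => kb p.1 p.2)
      {p : ℝ × ℝ | 0 ≤ p.2 ∧ p.2 ≤ p.1 ∧ p.1 ≤ 1})
    (hkM : ∀ i ∈ Finset.Icc 1 n, ∀ x ξ : ℝ, 0 ≤ ξ → ξ ≤ x → x ≤ 1 → |kk i x ξ| ≤ M)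
    (hkbM : ∀ x ξ : ℝ, 0 ≤ ξ → ξ ≤ x → x ≤ 1 → |kb x ξ| ≤ M)
    (α : ℕ → ℝ → ℝ) (β : ℝ → ℝ)
    (hα : ∀ i ∈ Finset.Icc 1 n, MemLp (α i) 2 (volume.restrict (Set.Icc (0:ℝ) 1)))
    (hβ : MemLp β 2 (volume.restrict (Set.Icc (0:ℝ) 1))) :
    Real.sqrt (∫ x in (0:ℝ)..1,
        ((1 / n : ℝ) * ∑ i ∈ Finset.Icc 1 n, (α i x) ^ 2 +
          (β x + ∫ ξ in (0:ℝ)..x,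
            ((1 / n : ℝ) * ∑ i ∈ Finset.Icc 1 n, kk i x ξ * α i ξ
              + kb x ξ * β ξ)) ^ 2)) ≤
      (1 + 2 * M) * Real.sqrt (∫ x in (0:ℝ)..1,
        ((1 / n : ℝ) * ∑ i ∈ Finset.Icc 1 n, (α i x) ^ 2 + (β x) ^ 2)) :=
  stmt_11_general n M hM kk kb hkM hkbM α β hα hβ
end

section
/- Define on [0,1]³ and [0,1]² the parameters μ(x) = 1, λ(x,y) = 1, σ(x,y,η) = x³(x+1)(y − 1/2)(η − 1/2), W(x,y) = x(x+1)eˣ(y − 1/2), θ(x,y) = −70 e^{35x/π²} y(y−1), q(y) = cos(2πy). Then the functions k(x,ξ,y) = 35 y(y−1) e^{35ξ/π²} and k̄(x,ξ) = 35/(2π²) satisfy, for all (x,ξ) ∈ 𝒯 and all y ∈ [0,1], the continuum kernel equations: μ(x)∂ₓk(x,ξ,y) − λ(ξ,y)∂_ξk(x,ξ,y) − θ(ξ,y)k̄(x,ξ) = ∂_ξλ(ξ,y)·k(x,ξ,y) + ∫₀¹σ(ξ,η,y)k(x,ξ,η)dη; μ(x)∂ₓk̄(x,ξ) + μ(ξ)∂_ξk̄(x,ξ)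 = −μ′(ξ)k̄(x,ξ) + ∫₀¹W(ξ,y)k(x,ξ,y)dy; k(x,x,y) = −θ(x,y)/(λ(x,y)+μ(x)); and μ(0)k̄(x,0) = ∫₀¹q(y)λ(0,y)k(x,0,y)dy. -/
/-!
The kernel `k` is a multiple of `y(y - 1)`, which is symmetric about `y = 1/2`, so its moments
against the odd factors `η - 1/2` of `σ` and `W` vanish. What remains of the first equation is the
source term `θ k̄`, balanced exactly by the `ξ`-derivative of `e^{35ξ/π²}`; the boundary value
`k̄ = 35/(2π²)` is the integral of `cos(2πy) · 35y(y - 1)`, computed by integrating by parts twice.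
-/

theorem integral_sub_half_mul_mul_sub_one :
    ∫ η in (0:ℝ)..1, (η - 1 / 2) * (η * (η - 1)) = 0 := by
  -- antiderivative `(η(η - 1))² / 4`, which vanishes at both endpoints
  have hF : ∀ η ∈ Set.uIcc (0:ℝ) 1,
      HasDerivAt (fun t : ℝ => (t * (t - 1)) ^ 2 / 4) ((η - 1 / 2) * (η * (η - 1))) η := by
    intro η _
    refine ((((hasDerivAt_id' η).mul ((hasDerivAt_id' η).sub_const 1)).pow 2).div_const 4
      ).congr_deriv ?_
    simp only [Pi.mul_apply]
    ring
  rw [intervalIntegral.integral_eq_sub_of_hasDerivAt hF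
    ((by fun_prop : Continuous _).intervalIntegrable _ _)]
  norm_num

theorem integral_cos_two_pi_mul_mul_sub_one :
    ∫ y in (0:ℝ)..1, Real.cos (2 * Real.pi * y) * (y * (y - 1)) = 1 / (2 * Real.pi ^ 2) := by
  set a := 2 * Real.pi
  have ha : a ≠ 0 := mul_ne_zero two_ne_zero Real.pi_ne_zero
  have hF : ∀ y ∈ Set.uIcc (0:ℝ) 1, HasDerivAt
      (fun t => t * (t - 1) * Real.sin (a * t) / a + (2 * t - 1) * Real.cos (a * t) / a ^ 2
        - 2 * Real.sin (a * t) / a ^ 3)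
      (Real.cos (a * y) * (y * (y - 1))) y := by
    intro y _
    have hs := ((hasDerivAt_id' y).const_mul a).sin
    have hc := ((hasDerivAt_id' y).const_mul a).cos
    have hp := (hasDerivAt_id' y).mul ((hasDerivAt_id' y).sub_const 1)
    have hl := ((hasDerivAt_id' y).const_mul 2).sub_const 1
    refine ((((hp.mul hs).div_const a).add ((hl.mul hc).div_const (a ^ 2))).sub
      ((hs.const_mul 2).div_const (a ^ 3))).congr_deriv ?_
    simp only [Pi.mul_apply]
    field_simp
    ring
  rw [intervalIntegral.integral_eq_sub_of_hasDerivAt hF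
    ((by fun_prop : Continuous _).intervalIntegrable _ _)]
  simp only [a, mul_one, mul_zero, Real.sin_two_pi, Real.cos_two_pi, Real.sin_zero,
    Real.cos_zero]
  field_simp
  ring

/-- With the explicit parameters `μ ≡ 1`, `λ ≡ 1`,
`σ(x,y,η) = x³(x+1)(y−1/2)(η−1/2)`, `W(x,y) = x(x+1)eˣ(y−1/2)`,
`θ(x,y) = −70e^{35x/π²}y(y−1)`, `q(y) = cos(2πy)`, the functions
`k(x,ξ,y) = 35y(y−1)e^{35ξ/π²}` and `k̄(x,ξ) = 35/(2π²)` satisfy the continuum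
kernel equations on the triangle `𝒯` for all `y ∈ [0,1]`. -/
theorem stmt_12 :
    let μ : ℝ → ℝ := fun _ => 1
    let lam : ℝ → ℝ → ℝ := fun _ _ => 1
    let σ : ℝ → ℝ → ℝ → ℝ := fun x y η => x ^ 3 * (x + 1) * (y - 1 / 2) * (η - 1 / 2)
    let W : ℝ → ℝ → ℝ := fun x y => x * (x + 1) * Real.exp x * (y - 1 / 2)
    let θ : ℝ → ℝ → ℝ := fun x y => -70 * Real.exp (35 * x / Real.pi ^ 2) * y * (y - 1)
    let q : ℝ → ℝ := fun y => Real.cos (2 * Real.pi * y)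
    let k : ℝ → ℝ → ℝ → ℝ := fun _ ξ y => 35 * y * (y - 1) * Real.exp (35 * ξ / Real.pi ^ 2)
    let kb : ℝ → ℝ → ℝ := fun _ _ => 35 / (2 * Real.pi ^ 2)
    ∀ x ξ y : ℝ, 0 ≤ ξ → ξ ≤ x → x ≤ 1 → y ∈ Set.Icc (0:ℝ) 1 →
      (μ x * deriv (fun x' => k x' ξ y) x - lam ξ y * deriv (fun ξ' => k x ξ' y) ξ
          - θ ξ y * kb x ξ
        = deriv (fun ξ' => lam ξ' y) ξ * k x ξ y
          + ∫ η in (0:ℝ)..1, σ ξ η y * k x ξ η) ∧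
      (μ x * deriv (fun x' => kb x' ξ) x + μ ξ * deriv (fun ξ' => kb x ξ') ξ
        = -deriv μ ξ * kb x ξ + ∫ y' in (0:ℝ)..1, W ξ y' * k x ξ y') ∧
      (k x x y = -θ x y / (lam x y + μ x)) ∧
      (μ 0 * kb x 0 = ∫ y' in (0:ℝ)..1, q y' * lam 0 y' * k x 0 y') := by
  intro μ lam σ W θ q k kb x ξ y _ _ _ _
  have hπ := Real.pi_ne_zero
  have hE : HasDerivAt (fun ξ' => 35 * y * (y - 1) * Real.exp (35 * ξ' / Real.pi ^ 2))
      (35 * y * (y - 1) * (Real.exp (35 * ξ / Real.pi ^ 2) * (35 / Real.pi ^ 2))) ξ :=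
    ((((hasDerivAt_id ξ).const_mul 35).div_const _).exp.congr_deriv (by simp)).const_mul _
  have hσk : ∫ η in (0:ℝ)..1, σ ξ η y * k x ξ η = 0 := by
    rw [intervalIntegral.integral_congr (g := fun η => 35 * ξ ^ 3 * (ξ + 1) * (y - 1 / 2) *
      Real.exp (35 * ξ / Real.pi ^ 2) * ((η - 1 / 2) * (η * (η - 1)))) (fun η _ => by ring),
      intervalIntegral.integral_const_mul, integral_sub_half_mul_mul_sub_one, mul_zero]
  have hWk : ∫ y' in (0:ℝ)..1, W ξ y' * k x ξ y' = 0 := by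
    rw [intervalIntegral.integral_congr (g := fun y' => 35 * ξ * (ξ + 1) * Real.exp ξ *
      Real.exp (35 * ξ / Real.pi ^ 2) * ((y' - 1 / 2) * (y' * (y' - 1)))) (fun y' _ => by ring),
      intervalIntegral.integral_const_mul, integral_sub_half_mul_mul_sub_one, mul_zero]
  have hqk : ∫ y' in (0:ℝ)..1, q y' * lam 0 y' * k x 0 y' = 35 / (2 * Real.pi ^ 2) := by
    rw [intervalIntegral.integral_congr
      (g := fun y' => 35 * (Real.cos (2 * Real.pi * y') * (y' * (y' - 1)))) (fun y' _ => by
        simp only [q, lam, k, mul_zero, zero_div, Real.exp_zero]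
        ring),
      intervalIntegral.integral_const_mul, integral_cos_two_pi_mul_mul_sub_one]
    ring
  refine ⟨?_, ?_, ?_, ?_⟩
  · rw [hσk, hE.deriv]
    simp only [μ, lam, θ, k, kb, deriv_const']
    field_simp
    ring
  · rw [hWk]
    simp only [μ, kb, deriv_const']
    ring
  · simp only [k, θ, lam, μ]
    ring
  · rw [hqk]
    simp only [μ, kb]
    ring
end
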